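/- Let n ≥ 1 and define u : ℝⁿ → ℝ by u(x) = Σ_{j=0}^∞ max(0, 1 - 2^{-j} |x - (4^j, 0, …, 0)|). Then both sets {x : u(x) = 0} and {x : u(x) > 1/2} have infinite Lebesgue measure. Consequently, for every constant c ∈ ℝ, the function u - c is not in L^p(ℝⁿ) for any p < ∞. -/

import Mathlib

/-!
Near its centre `(4^j, 0, …, 0)` the sum `u` reduces to the single tent of radius `2^j`, because
the centres are `2^j + 2^k` apart; so `{u > 1/2}` contains balls of radius `2^j / 2`. The
half-space `{x₀ ≤ 0}` misses every tent, so `{u = 0}` contains arbitrarily large balls as well.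
A function in `Lᵖ`, `p < ∞`, has `|f| ≥ ε` only on a set of finite measure, whereas `u - c` is at
least `1/4` in absolute value on one of these two sets of infinite measure.
-/

open MeasureTheory Set Metric ENNReal

section Tent

variable {X ι : Type*} [PseudoMetricSpace X]

noncomputable def tent (c : X) (r : ℝ) (x : X) : ℝ := max 0 (1 - dist x c / r)

lemma tent_eq_zero_of_le_dist {c x : X} {r : ℝ} (hr : 0 < r) (h : r ≤ dist x c) :
    tent c r x = 0 := by
  refine max_eq_left ?_
  rw [sub_nonpos, le_div_iff₀ hr, one_mul]
  exact h

lemma half_lt_tent {c x : X} {r : ℝ} (h : dist x c < r / 2) : 1 / 2 < tent c r x := by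
  have hr : 0 < r := by linarith [dist_nonneg (x := x) (y := c)]
  refine lt_max_of_lt_right ?_
  rw [lt_sub_comm, div_lt_iff₀ hr]
  linarith

lemma tsum_tent_eq_zero {c : ι → X} {r : ι → ℝ} {x : X} (hr : ∀ j, 0 < r j)
    (h : ∀ j, r j ≤ dist x (c j)) : ∑' j, tent (c j) (r j) x = 0 := by
  simp only [tent_eq_zero_of_le_dist (hr _) (h _), tsum_zero]

lemma tsum_tent_eq_of_dist_lt {c : ι → X} {r : ι → ℝ} {x : X} {k : ι} (hr : ∀ j, 0 < r j)
    (hsep : ∀ j, j ≠ k → r j + r k ≤ dist (c j) (c k)) (hx : dist x (c k) < r k) :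
    ∑' j, tent (c j) (r j) x = tent (c k) (r k) x := by
  refine tsum_eq_single k fun j hj => tent_eq_zero_of_le_dist (hr j) ?_
  linarith [hsep j hj, dist_triangle_left (c j) (c k) x]

end Tent

theorem measure_eq_top_of_forall_exists_ball_subset {E : Type*} [NormedAddCommGroup E]
    [MeasurableSpace E] [BorelSpace E] [WeaklyLocallyCompactSpace E] [NoncompactSpace E]
    (μ : Measure E) [μ.IsAddHaarMeasure] {s : Set E} (h : ∀ r : ℝ, ∃ x, ball x r ⊆ s) :
    μ s = ∞ := by
  have hmono : Monotone fun k : ℕ => ball (0 : E) k :=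
    fun _ _ hkl => ball_subset_ball (Nat.cast_le.2 hkl)
  refine top_unique ?_
  rw [← measure_univ_of_isAddLeftInvariant μ, ← iUnion_ball_nat 0, hmono.measure_iUnion]
  refine iSup_le fun k => ?_
  obtain ⟨x, hx⟩ := h k
  rw [← Measure.addHaar_ball_center μ x]
  exact measure_mono hx

lemma MeasureTheory.MemLp.measure_le_abs_lt_top {α : Type*} [MeasurableSpace α]
    {μ : Measure α} {f : α → ℝ} {p : ℝ≥0∞} (hf : MemLp f p μ) (hp0 : p ≠ 0) (hp : p ≠ ∞)
    {ε : ℝ} (hε : 0 < ε) : μ {x | ε ≤ |f x|} < ∞ := by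
  refine (measure_mono fun x (hx : ε ≤ |f x|) => ?_).trans_lt
    (hf.meas_ge_lt_top hp0 hp (ε := ε.toNNReal) (by simpa using hε))
  simpa [← NNReal.coe_le_coe, hε.le] using hx

/-- Whatever `c` is, `f - c` is at least `(b - a) / 2` in absolute value on one of the two sets. -/
theorem not_memLp_sub_const_of_measure_eq_top {α : Type*} [MeasurableSpace α] {μ : Measure α}
    {f : α → ℝ} {a b : ℝ} (hab : a < b) (ha : μ {x | f x ≤ a} = ∞) (hb : μ {x | b ≤ f x} = ∞)
    (c : ℝ) {p : ℝ≥0∞} (hp0 : p ≠ 0) (hp : p ≠ ∞) : ¬ MemLp (fun x => f x - c) p μ := by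
  intro hf
  have hfin := hf.measure_le_abs_lt_top hp0 hp (ε := (b - a) / 2) (by linarith)
  rcases le_total c ((a + b) / 2) with hc | hc
  · refine (measure_mono_top (fun x (hx : b ≤ f x) => ?_) hb).not_lt hfin
    exact le_abs.2 (Or.inl (by linarith) : (b - a) / 2 ≤ f x - c ∨ _)
  · refine (measure_mono_top (fun x (hx : f x ≤ a) => ?_) ha).not_lt hfin
    exact le_abs.2 (Or.inr (by linarith) : _ ∨ (b - a) / 2 ≤ -(f x - c))

lemma four_pow_add_two_pow_add_two_pow_le {j k : ℕ} (h : j < k) :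
    4 ^ j + 2 ^ j + 2 ^ k ≤ 4 ^ k := by
  obtain ⟨m, rfl⟩ : ∃ m, k = m + 1 := ⟨k - 1, by omega⟩
  have h4 : 4 ^ j ≤ 4 ^ m := Nat.pow_le_pow_right (by norm_num) (by omega)
  have h2j : 2 ^ j ≤ 4 ^ j := Nat.pow_le_pow_left (by norm_num) j
  have h2m : 2 ^ m ≤ 4 ^ m := Nat.pow_le_pow_left (by norm_num) m
  rw [pow_succ, pow_succ]
  omega

lemma two_pow_add_two_pow_le_abs_four_pow_sub {j k : ℕ} (h : j ≠ k) :
    (2 : ℝ) ^ j + 2 ^ k ≤ |(4 : ℝ) ^ j - 4 ^ k| := by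
  wlog hjk : j < k generalizing j k
  · rw [add_comm, abs_sub_comm]
    exact this h.symm (by omega)
  have key : (4 : ℝ) ^ j + 2 ^ j + 2 ^ k ≤ 4 ^ k := by
    exact_mod_cast four_pow_add_two_pow_add_two_pow_le hjk
  have : (0 : ℝ) < 2 ^ j + 2 ^ k := by positivity
  rw [abs_sub_comm, abs_of_nonneg (by linarith)]
  linarith

section Euclidean

variable {n : ℕ}

lemma le_dist_single_of_nonpos {x : EuclideanSpace ℝ (Fin n)} {i : Fin n} {a : ℝ}
    (hx : x i ≤ 0) : a ≤ dist x (EuclideanSpace.single i a) := by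
  have h := PiLp.dist_apply_le x (EuclideanSpace.single i a) i
  rw [PiLp.single_eq_same, Real.dist_eq, abs_sub_comm] at h
  calc a ≤ a - x i := by linarith
    _ ≤ |a - x i| := le_abs_self _
    _ ≤ dist x (EuclideanSpace.single i a) := h

lemma ball_single_neg_subset (i : Fin n) (r : ℝ) :
    ball (EuclideanSpace.single i (-r)) r ⊆ {x : EuclideanSpace ℝ (Fin n) | x i ≤ 0} := by
  intro x hx
  have h := (PiLp.dist_apply_le x (EuclideanSpace.single i (-r)) i).trans_lt (mem_ball.1 hx)
  rw [PiLp.single_eq_same, Real.dist_eq] at h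
  show x i ≤ 0
  linarith [(abs_lt.1 h).2]

end Euclidean

theorem tent_function_not_Lp (n : ℕ) (hn : 1 ≤ n) :
    let c : ℕ → EuclideanSpace ℝ (Fin n) :=
      fun j => EuclideanSpace.single ⟨0, hn⟩ ((4 : ℝ) ^ j)
    let u : EuclideanSpace ℝ (Fin n) → ℝ :=
      fun x => ∑' j : ℕ, max 0 (1 - dist x (c j) / 2 ^ j)
    volume {x : EuclideanSpace ℝ (Fin n) | u x = 0} = ⊤ ∧
      volume {x : EuclideanSpace ℝ (Fin n) | 1 / 2 < u x} = ⊤ ∧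
      ∀ (c' : ℝ) (p : ℝ), 0 < p →
        ¬ MeasureTheory.MemLp (fun x => u x - c') (ENNReal.ofReal p)
            (volume : Measure (EuclideanSpace ℝ (Fin n))) := by
  intro c u
  have : Nonempty (Fin n) := ⟨⟨0, hn⟩⟩
  have hu : ∀ x, u x = ∑' j, tent (c j) (2 ^ j) x := fun x => rfl
  have hr : ∀ j : ℕ, (0 : ℝ) < 2 ^ j := fun j => by positivity
  have hsep : ∀ j k, j ≠ k → (2 : ℝ) ^ j + 2 ^ k ≤ dist (c j) (c k) := fun j k h => by
    simpa [c, PiLp.dist_single_same, Real.dist_eq]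
      using two_pow_add_two_pow_le_abs_four_pow_sub h
  have hzero : volume {x | u x = 0} = ∞ := by
    refine measure_eq_top_of_forall_exists_ball_subset volume fun r =>
      ⟨_, (ball_single_neg_subset ⟨0, hn⟩ r).trans fun x (hx : x _ ≤ 0) => ?_⟩
    refine (hu x).trans (tsum_tent_eq_zero hr fun j => ?_)
    exact (pow_le_pow_left₀ zero_le_two (by norm_num) j).trans (le_dist_single_of_nonpos hx)
  have hhalf : volume {x | 1 / 2 < u x} = ∞ := by
    refine measure_eq_top_of_forall_exists_ball_subset volume fun r => ?_
    obtain ⟨j, hj⟩ := pow_unbounded_of_one_lt (2 * r) (one_lt_two (α := ℝ))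
    refine ⟨c j, fun x hx => ?_⟩
    have hx : dist x (c j) < 2 ^ j / 2 := by linarith [mem_ball.1 hx]
    show 1 / 2 < u x
    rw [hu, tsum_tent_eq_of_dist_lt hr (fun i hi => hsep i j hi) (by linarith [hr j])]
    exact half_lt_tent hx
  refine ⟨hzero, hhalf, fun c' p hp => ?_⟩
  refine not_memLp_sub_const_of_measure_eq_top (a := 0) (b := 1 / 2) (by norm_num)
    (measure_mono_top (fun x (hx : u x = 0) => hx.le) hzero)
    (measure_mono_top (fun x (hx : 1 / 2 < u x) => hx.le) hhalf) c' ?_ ofReal_ne_top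
  simpa using hp
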